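/- Let n ∈ ℕ, n ≥ 2. For every Banach limit B₁ with B₁(σ_n x) = B₁(x) for all x ∈ ℓ∞, and every B₂ belonging to the closure in the dual-norm topology of the convex hull of the set of extreme points of 𝔅, one has ‖B₁ − B₂‖_{ℓ∞*} = 2. -/

import Mathlib

/-! For states `B, C` of `ℓ∞` (positive functionals with `B 1 = C 1 = 1`), `‖B - C‖ = 2` means
that some unit vector is nearly `1` under `B` and nearly `-1` under `C`. Taking pointwise minima
of such vectors shows that the states at distance `2` from `B₁` form a convex set. By
[ASSU2, Theorem 14] it contains every extreme point of `𝔅`, hence their convex hull, and the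
sphere of radius `2` around `B₁` is closed. -/

open Filter BoundedContinuousFunction

noncomputable section

/-- `ℓ∞`: the space of bounded real sequences (indexed from `0`). -/
abbrev LInf : Type := BoundedContinuousFunction ℕ ℝ

/-- The translation (shift) operator `T(x₁,x₂,…) = (0,x₁,x₂,…)` (0-indexed). -/
def shift (x : LInf) : LInf :=
  BoundedContinuousFunction.ofNormedAddCommGroup
    (fun n => if n = 0 then 0 else x (n - 1)) continuous_of_discreteTopology ‖x‖
    (by
      intro n
      rcases n with _ | n
      · simp [norm_nonneg x]
      · simpa using x.norm_coe_le_norm n)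

/-- The dilation operator `σ_m`, repeating each entry `m` times
(0-indexed: `(σ_m x)ₙ = x_{⌊n/m⌋}`, i.e. `(σ_m x)ₙ = x_{⌈n/m⌉}` in 1-indexed notation). -/
def dil (m : ℕ) (x : LInf) : LInf :=
  x.compContinuous ⟨fun n => n / m, continuous_of_discreteTopology⟩

/-- A Banach limit: a positive, normalised, shift-invariant continuous linear
functional on `ℓ∞`. -/
def IsBanachLimit (B : LInf →L[ℝ] ℝ) : Prop :=
  (∀ x : LInf, (∀ n, 0 ≤ x n) → 0 ≤ B x) ∧ B 1 = 1 ∧ ∀ x : LInf, B (shift x) = B x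

/-- The set `𝔅` of all Banach limits, as a subset of the dual space of `ℓ∞`. -/
def BanachLimits : Set (LInf →L[ℝ] ℝ) := {B | IsBanachLimit B}

section States

variable {α : Type*} [TopologicalSpace α]

def IsState (C : (α →ᵇ ℝ) →L[ℝ] ℝ) : Prop :=
  (∀ x : α →ᵇ ℝ, (∀ a, 0 ≤ x a) → 0 ≤ C x) ∧ C 1 = 1

lemma BoundedContinuousFunction.norm_le_one_iff (x : α →ᵇ ℝ) : ‖x‖ ≤ 1 ↔ -1 ≤ x ∧ x ≤ 1 := by
  simp only [norm_le zero_le_one, Real.norm_eq_abs, abs_le]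
  exact ⟨fun h => ⟨fun a => (h a).1, fun a => (h a).2⟩, fun h a => ⟨h.1 a, h.2 a⟩⟩

lemma convex_setOf_isState : Convex ℝ {C : (α →ᵇ ℝ) →L[ℝ] ℝ | IsState C} := by
  intro C₁ hC₁ C₂ hC₂ a b ha hb hab
  refine ⟨fun x hx => ?_, ?_⟩
  · exact add_nonneg (mul_nonneg ha (hC₁.1 x hx)) (mul_nonneg hb (hC₂.1 x hx))
  · simp [hC₁.2, hC₂.2, hab]

namespace IsState

variable {B C : (α →ᵇ ℝ) →L[ℝ] ℝ}

lemma mono (hC : IsState C) {x y : α →ᵇ ℝ} (hxy : x ≤ y) : C x ≤ C y := by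
  have := hC.1 (y - x) fun a => sub_nonneg.2 (hxy a)
  rwa [map_sub, sub_nonneg] at this

lemma apply_const (hC : IsState C) (r : ℝ) : C (r • 1) = r := by
  rw [map_smul, hC.2, smul_eq_mul, mul_one]

lemma abs_apply_le (hC : IsState C) (x : α →ᵇ ℝ) : |C x| ≤ ‖x‖ := by
  have hx : ∀ a, |x a| ≤ ‖x‖ := x.norm_coe_le_norm
  refine abs_le.2 ⟨?_, ?_⟩
  · simpa [hC.apply_const] using
      hC.mono (x := (-‖x‖) • 1) fun a => by simpa using (abs_le.1 (hx a)).1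
  · simpa [hC.apply_const] using
      hC.mono (y := ‖x‖ • 1) fun a => by simpa using (abs_le.1 (hx a)).2

lemma norm_le_one (hC : IsState C) : ‖C‖ ≤ 1 :=
  C.opNorm_le_bound zero_le_one fun x => by simpa using hC.abs_apply_le x

lemma norm_sub_le_two (hB : IsState B) (hC : IsState C) : ‖B - C‖ ≤ 2 := by
  linarith [norm_sub_le B C, hB.norm_le_one, hC.norm_le_one]

lemma norm_sub_eq_two_iff (hB : IsState B) (hC : IsState C) :
    ‖B - C‖ = 2 ↔ ∀ ε > 0, ∃ x : α →ᵇ ℝ, ‖x‖ ≤ 1 ∧ 1 - ε ≤ B x ∧ C x ≤ -1 + ε := by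
  constructor
  · intro h ε hε
    obtain ⟨x, hx, hBCx⟩ := (B - C).exists_lt_apply_of_lt_opNorm (by linarith : 2 - ε < ‖B - C‖)
    rw [_root_.sub_apply, Real.norm_eq_abs] at hBCx
    obtain ⟨y, hy, hBCy⟩ : ∃ y : α →ᵇ ℝ, ‖y‖ ≤ 1 ∧ 2 - ε < B y - C y := by
      rcases lt_abs.1 hBCx with h | h
      · exact ⟨x, hx.le, h⟩
      · exact ⟨-x, by simpa using hx.le, by simp only [map_neg]; linarith⟩
    have hBy := abs_le.1 ((hB.abs_apply_le y).trans hy)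
    have hCy := abs_le.1 ((hC.abs_apply_le y).trans hy)
    exact ⟨y, hy, by linarith, by linarith⟩
  · refine fun h => le_antisymm (hB.norm_sub_le_two hC) (le_of_forall_pos_lt_add fun ε hε => ?_)
    obtain ⟨x, hx, hBx, hCx⟩ := h (ε / 3) (by positivity)
    have hBCx : |B x - C x| ≤ ‖B - C‖ := by
      simpa using ((B - C).le_opNorm x).trans (mul_le_of_le_one_right (norm_nonneg _) hx)
    linarith [le_abs_self (B x - C x)]

lemma add_sub_one_le_apply_inf (hB : IsState B) {x y : α →ᵇ ℝ} (hx : ‖x‖ ≤ 1) (hy : ‖y‖ ≤ 1) :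
    B x + B y - 1 ≤ B (x ⊓ y) := by
  have hxy : x + y - 1 ≤ x ⊓ y := fun a => by
    have hxa : x a ≤ 1 := ((norm_le_one_iff x).1 hx).2 a
    have hya : y a ≤ 1 := ((norm_le_one_iff y).1 hy).2 a
    change x a + y a - 1 ≤ min (x a) (y a)
    exact le_min (by linarith) (by linarith)
  simpa [hB.2] using hB.mono hxy

end IsState

lemma convex_setOf_isState_norm_sub_eq_two {B : (α →ᵇ ℝ) →L[ℝ] ℝ} (hB : IsState B) :
    Convex ℝ {C | IsState C ∧ ‖B - C‖ = 2} := by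
  intro C₁ ⟨hC₁, hBC₁⟩ C₂ ⟨hC₂, hBC₂⟩ a b ha hb hab
  have hC : IsState (a • C₁ + b • C₂) := convex_setOf_isState hC₁ hC₂ ha hb hab
  refine ⟨hC, (hB.norm_sub_eq_two_iff hC).2 fun ε hε => ?_⟩
  obtain ⟨x₁, hx₁, hBx₁, hCx₁⟩ := (hB.norm_sub_eq_two_iff hC₁).1 hBC₁ (ε / 2) (by positivity)
  obtain ⟨x₂, hx₂, hBx₂, hCx₂⟩ := (hB.norm_sub_eq_two_iff hC₂).1 hBC₂ (ε / 2) (by positivity)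
  have hx₁' := (norm_le_one_iff x₁).1 hx₁
  refine ⟨x₁ ⊓ x₂, (norm_le_one_iff _).2 ⟨le_inf hx₁'.1 ((norm_le_one_iff x₂).1 hx₂).1,
    inf_le_left.trans hx₁'.2⟩, by linarith [hB.add_sub_one_le_apply_inf hx₁ hx₂], ?_⟩
  have h₁ : C₁ (x₁ ⊓ x₂) ≤ -1 + ε / 2 := (hC₁.mono inf_le_left).trans hCx₁
  have h₂ : C₂ (x₁ ⊓ x₂) ≤ -1 + ε / 2 := (hC₂.mono inf_le_right).trans hCx₂
  calc (a • C₁ + b • C₂) (x₁ ⊓ x₂) = a * C₁ (x₁ ⊓ x₂) + b * C₂ (x₁ ⊓ x₂) := rfl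
    _ ≤ a * (-1 + ε / 2) + b * (-1 + ε / 2) := by gcongr
    _ = -1 + ε / 2 := by rw [← add_mul, hab, one_mul]
    _ ≤ -1 + ε := by linarith

end States

lemma IsBanachLimit.isState {B : LInf →L[ℝ] ℝ} (hB : IsBanachLimit B) : IsState B :=
  ⟨hB.1, hB.2.1⟩

theorem norm_dilation_invariant_sub_convex_closure_extreme (n : ℕ)
    (hT14 : ∀ B₁ B₂ : LInf →L[ℝ] ℝ, IsBanachLimit B₁ → (∀ x : LInf, B₁ (dil n x) = B₁ x) →
      B₂ ∈ Set.extremePoints ℝ BanachLimits → ‖B₁ - B₂‖ = 2)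
    (B₁ B₂ : LInf →L[ℝ] ℝ) (hB₁ : IsBanachLimit B₁)
    (hinv : ∀ x : LInf, B₁ (dil n x) = B₁ x)
    (hB₂ : B₂ ∈ closure (convexHull ℝ (Set.extremePoints ℝ BanachLimits))) :
    ‖B₁ - B₂‖ = 2 := by
  have hext : Set.extremePoints ℝ BanachLimits ⊆ {C | IsState C ∧ ‖B₁ - C‖ = 2} := fun C hC =>
    have hC' : C ∈ BanachLimits := extremePoints_subset hC
    ⟨IsBanachLimit.isState hC', hT14 B₁ C hB₁ hinv hC⟩
  have hhull : convexHull ℝ (Set.extremePoints ℝ BanachLimits) ⊆ Metric.sphere B₁ 2 :=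
    (convexHull_min hext (convex_setOf_isState_norm_sub_eq_two hB₁.isState)).trans
      fun C h => (dist_eq_norm C B₁).trans ((norm_sub_rev C B₁).trans h.2)
  exact (norm_sub_rev B₁ B₂).trans
    ((dist_eq_norm B₂ B₁).symm.trans (closure_minimal hhull Metric.isClosed_sphere hB₂))

end
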